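/- There exists a countably infinite commutative semigroup S with a zero element 0 such that S is ℵ₀-categorical, a·a = 0 for every a ∈ S (so S is nil of degree 2), and S·S = S; in particular, S is nil but not nilpotent (S^n ≠ {0} for every n ≥ 1). -/

import Mathlib

/-- Two `n`-tuples of a semigroup are automorphically equivalent if some semigroup
automorphism maps one to the other componentwise. -/
def AutRel (S : Type*) [Semigroup S] {n : ℕ} (a b : Fin n → S) : Prop :=
  ∃ φ : S ≃* S, ∀ k, φ (a k) = b k

/-- A semigroup is ℵ₀-categorical if, for every `n ≥ 1`, the action of its automorphism
group on `n`-tuples has only finitely many orbits. -/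
def Aleph0Categorical (S : Type*) [Semigroup S] : Prop :=
  ∀ n : ℕ, 1 ≤ n → ∃ t : Set (Fin n → S), t.Finite ∧
    ∀ a : Fin n → S, ∃ b ∈ t, AutRel S b a

/-- `prodSet S n` is the set `S^(n+1)` of all products of `n+1` elements of `S`. -/
def prodSet (S : Type*) [Semigroup S] : ℕ → Set S
  | 0 => Set.univ
  | n + 1 => {x | ∃ a ∈ prodSet S n, ∃ b : S, x = a * b}

/-!
Take for `S` the Boolean algebra of finite unions of intervals `(u, v]` of `ℚ` contained in
`(0, 1]`, with `A * B = A ∪ B` if `A` and `B` are disjoint and nonempty, and `A * B = ∅`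
otherwise. This product is associative and commutative, `A * A = ∅`, and every nonempty `A`
is the product of two disjoint nonempty pieces of it, so `S * S = S` and no power of `S` is `{∅}`.

Taking images under an injective map preserves the product. An `n`-tuple of elements of `S`
cuts `(0, 1]` into `2 ^ n` Venn cells, which are again in `S`. Each nonempty member of `S` is a
finite disjoint union of intervals, so piecewise affine maps carry it onto `(0, 1]`, in both
directions preserving membership in `S`. Hence if two tuples have the same empty Venn cells,
gluing such maps cell by cell gives a bijection of `(0, 1]` whose image map is an automorphism of
`S` carrying one tuple to the other: there are at most `2 ^ 2 ^ n` orbits on `n`-tuples.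
-/

open Set Function MeasureTheory

section UnionIfDisjoint

open scoped Classical

variable {α β : Type*}

def unionIfDisjoint (A B : Set α) : Set α :=
  if Disjoint A B ∧ A.Nonempty ∧ B.Nonempty then A ∪ B else ∅

theorem unionIfDisjoint_of_disjoint {A B : Set α} (h : Disjoint A B) (hA : A.Nonempty)
    (hB : B.Nonempty) : unionIfDisjoint A B = A ∪ B :=
  if_pos ⟨h, hA, hB⟩

theorem unionIfDisjoint_comm (A B : Set α) : unionIfDisjoint A B = unionIfDisjoint B A := by
  simp only [unionIfDisjoint, disjoint_comm (a := A), union_comm A, and_comm (a := A.Nonempty)]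

@[simp]
theorem empty_unionIfDisjoint (A : Set α) : unionIfDisjoint ∅ A = ∅ := by
  simp [unionIfDisjoint]

@[simp]
theorem unionIfDisjoint_empty (A : Set α) : unionIfDisjoint A ∅ = ∅ := by
  simp [unionIfDisjoint]

@[simp]
theorem unionIfDisjoint_self (A : Set α) : unionIfDisjoint A A = ∅ := by
  simp +contextual [unionIfDisjoint]

theorem unionIfDisjoint_assoc (A B C : Set α) :
    unionIfDisjoint (unionIfDisjoint A B) C = unionIfDisjoint A (unionIfDisjoint B C) := by
  unfold unionIfDisjoint
  split_ifs <;> simp_all [disjoint_union_left, disjoint_union_right, union_assoc]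

theorem MeasureTheory.IsSetRing.unionIfDisjoint_mem {R : Set (Set α)} (hR : IsSetRing R)
    {A B : Set α} (hA : A ∈ R) (hB : B ∈ R) : unionIfDisjoint A B ∈ R := by
  unfold unionIfDisjoint
  split_ifs
  exacts [hR.union_mem hA hB, hR.empty_mem]

theorem unionIfDisjoint_subset {A B U : Set α} (hA : A ⊆ U) (hB : B ⊆ U) :
    unionIfDisjoint A B ⊆ U := by
  unfold unionIfDisjoint
  split_ifs
  exacts [union_subset hA hB, empty_subset U]

theorem Set.InjOn.disjoint_image_iff {f : α → β} {U A B : Set α} (hf : InjOn f U) (hA : A ⊆ U)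
    (hB : B ⊆ U) : Disjoint (f '' A) (f '' B) ↔ Disjoint A B := by
  simp only [disjoint_iff_inter_eq_empty, ← hf.image_inter hA hB, image_eq_empty]

theorem Set.InjOn.image_unionIfDisjoint {f : α → β} {U A B : Set α} (hf : InjOn f U)
    (hA : A ⊆ U) (hB : B ⊆ U) :
    f '' unionIfDisjoint A B = unionIfDisjoint (f '' A) (f '' B) := by
  simp only [unionIfDisjoint, image_nonempty, hf.disjoint_image_iff hA hB]
  split_ifs <;> simp [image_union]

end UnionIfDisjoint

theorem Set.Countable.supClosure {α : Type*} [CompleteLattice α] {S : Set α}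
    (hS : S.Countable) : (supClosure S).Countable := by
  refine ((countable_ofPred_finite_subset hS).image sSup).mono ?_
  rintro _ ⟨t, ht, htS, rfl⟩
  exact ⟨t, ⟨t.finite_toSet, htS⟩, by rw [Finset.sup'_eq_sup, Finset.sup_id_eq_sSup]⟩

theorem MeasureTheory.IsSetSemiring.supClosure_induction {α : Type*} {C : Set (Set α)}
    (hC : IsSetSemiring C) {p : Set α → Prop} (empty : p ∅) (mem : ∀ s ∈ C, s.Nonempty → p s)
    (union : ∀ s t, Disjoint s t → p s → p t → p (s ∪ t)) {s : Set α} (hs : s ∈ supClosure C) :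
    p s := by
  classical
  obtain ⟨P, hPC⟩ := hC.mem_supClosure_iff.1 hs
  suffices ∀ T ⊆ P.parts, p (T.sup id) by simpa [P.sup_parts] using this _ subset_rfl
  intro T hT
  induction T using Finset.induction_on with
  | empty => exact empty
  | insert a T ha ih =>
    have haP : a ∈ P.parts := hT (Finset.mem_insert_self a T)
    have hTP : T ⊆ P.parts := (Finset.subset_insert a T).trans hT
    rw [Finset.sup_insert]
    refine union _ _ (Finset.disjoint_sup_right.2 fun b hb => ?_) ?_ (ih hTP)
    · exact P.disjoint haP (hTP hb) (ne_of_mem_of_not_mem hb ha).symm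
    · exact mem a (hPC haP) (nonempty_iff_ne_empty.2 (P.ne_bot haP))

section IocRing

variable {α β : Type*} [LinearOrder α] [LinearOrder β]

variable (α) in
def iocRing : Set (Set α) :=
  supClosure {s | ∃ u v, u ≤ v ∧ s = Ioc u v}

theorem isSetRing_iocRing [Nonempty α] : IsSetRing (iocRing α) :=
  IsSetSemiring.Ioc.isSetRing_supClosure

theorem Ioc_mem_iocRing (u v : α) : Ioc u v ∈ iocRing α := by
  refine subset_supClosure ?_
  rcases le_total u v with h | h
  · exact ⟨u, v, h, rfl⟩
  · exact ⟨u, u, le_rfl, by rw [Ioc_self, Ioc_eq_empty_of_le h]⟩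

theorem countable_iocRing [Countable α] : (iocRing α).Countable :=
  Countable.supClosure <| (countable_range fun p : α × α => Ioc p.1 p.2).mono <| by
    rintro _ ⟨u, v, -, rfl⟩
    exact ⟨(u, v), rfl⟩

theorem OrderIso.image_mem_iocRing (φ : α ≃o β) {A : Set α} (hA : A ∈ iocRing α) :
    φ '' A ∈ iocRing β := by
  refine supClosure_min (t := {A | φ '' A ∈ iocRing β}) ?_ ?_ hA
  · rintro _ ⟨u, v, -, rfl⟩
    simpa only [mem_ofPred_eq, φ.image_Ioc] using Ioc_mem_iocRing (φ u) (φ v)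
  · intro A hA B hB
    show φ '' (A ∪ B) ∈ iocRing β
    rw [image_union]
    exact supClosed_supClosure hA hB

end IocRing

theorem Set.image_piecewise_inter_union {α β : Type*} {s s' : Set α} [∀ x, Decidable (x ∈ s)]
    (f g : α → β) (hs : Disjoint s s') (A : Set α) :
    s.piecewise f g '' (A ∩ (s ∪ s')) = f '' (A ∩ s) ∪ g '' (A ∩ s') := by
  rw [inter_union_distrib_left, image_union,
    ((piecewise_eqOn s f g).mono inter_subset_right).image_eq,
    ((piecewise_eqOn_compl s f g).mono fun x hx => hs.notMem_of_mem_right hx.2).image_eq]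

namespace PartialEquiv

variable {α : Type*} {R : Set (Set α)}

def MapsMem (R : Set (Set α)) (e : PartialEquiv α α) : Prop :=
  ∀ A ∈ R, e '' (A ∩ e.source) ∈ R

theorem MapsMem.trans {e e' : PartialEquiv α α} (he : e.MapsMem R) (he' : e'.MapsMem R) :
    (e.trans e').MapsMem R := by
  intro A hA
  rw [trans_source, coe_trans, image_comp, ← inter_assoc, image_inter_preimage]
  exact he' _ (he A hA)

variable {e e' : PartialEquiv α α} (hs : Disjoint e.source e'.source)
  (ht : Disjoint e.target e'.target) [∀ x, Decidable (x ∈ e.source)]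
  [∀ y, Decidable (y ∈ e.target)]

theorem MapsMem.disjointUnion (hR : IsSetRing R) (he : e.MapsMem R) (he' : e'.MapsMem R) :
    (e.disjointUnion e' hs ht).MapsMem R := by
  intro A hA
  rw [disjointUnion_source, disjointUnion_apply, image_piecewise_inter_union _ _ hs]
  exact hR.union_mem (he A hA) (he' A hA)

theorem MapsMem.disjointUnion_symm (hR : IsSetRing R) (he : e.symm.MapsMem R)
    (he' : e'.symm.MapsMem R) :
    (e.disjointUnion e' hs ht).symm.MapsMem R := by
  intro A hA
  rw [symm_source, disjointUnion_target, disjointUnion_symm_apply,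
    image_piecewise_inter_union _ _ ht]
  exact hR.union_mem (he A hA) (he' A hA)

end PartialEquiv

section RingIsomorphic

open PartialEquiv

variable {α : Type*} {R : Set (Set α)} {U V W : Set α}

/-- `U` and `V` are matched by a bijection that, together with its inverse, maps the members of
`R` inside one of them to members of `R`. -/
def RingIsomorphic (R : Set (Set α)) (U V : Set α) : Prop :=
  ∃ e : PartialEquiv α α, e.source = U ∧ e.target = V ∧ e.MapsMem R ∧ e.symm.MapsMem R

theorem RingIsomorphic.symm (h : RingIsomorphic R U V) : RingIsomorphic R V U := by
  obtain ⟨e, hU, hV, he, he'⟩ := h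
  exact ⟨e.symm, hV, hU, he', he⟩

theorem RingIsomorphic.trans (h : RingIsomorphic R U V) (h' : RingIsomorphic R V W) :
    RingIsomorphic R U W := by
  obtain ⟨e, rfl, rfl, he, he_symm⟩ := h
  obtain ⟨e', he't, rfl, he', he'_symm⟩ := h'
  refine ⟨e.trans e', ?_, ?_, he.trans he', ?_⟩
  · rw [trans_source, he't, inter_eq_left.2 e.source_subset_preimage_target]
  · rw [trans_target, ← he't, inter_eq_left.2 e'.target_subset_preimage_source]
  · rw [trans_symm_eq_symm_trans_symm]
    exact he'_symm.trans he_symm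

theorem ringIsomorphic_empty (hR : IsSetRing R) : RingIsomorphic R ∅ ∅ :=
  ⟨ofSet ∅, rfl, rfl, fun _ _ => by simpa using hR.empty_mem,
    fun _ _ => by simpa using hR.empty_mem⟩

theorem RingIsomorphic.union (hR : IsSetRing R) {U' V' : Set α} (h : RingIsomorphic R U V)
    (h' : RingIsomorphic R U' V') (hU : Disjoint U U') (hV : Disjoint V V') :
    RingIsomorphic R (U ∪ U') (V ∪ V') := by
  classical
  obtain ⟨e, rfl, rfl, he, he_symm⟩ := h
  obtain ⟨e', rfl, rfl, he', he'_symm⟩ := h'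
  exact ⟨e.disjointUnion e' hU hV, rfl, rfl, he.disjointUnion hU hV hR he',
    he_symm.disjointUnion_symm hU hV hR he'_symm⟩

theorem RingIsomorphic.exists_partialEquiv_iUnion {ι : Type*} [Finite ι] (hR : IsSetRing R)
    {U V : ι → Set α} (hU : Pairwise (Disjoint on U)) (hV : Pairwise (Disjoint on V))
    (h : ∀ i, RingIsomorphic R (U i) (V i)) :
    ∃ e : PartialEquiv α α, e.source = ⋃ i, U i ∧ e.target = ⋃ i, V i ∧ e.MapsMem R ∧
      e.symm.MapsMem R ∧ ∀ i, e '' U i = V i := by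
  classical
  cases nonempty_fintype ι
  suffices ∀ t : Finset ι, ∃ e : PartialEquiv α α, e.source = ⋃ i ∈ t, U i ∧
      e.target = ⋃ i ∈ t, V i ∧ e.MapsMem R ∧ e.symm.MapsMem R ∧ ∀ i ∈ t, e '' U i = V i by
    simpa using this Finset.univ
  intro t
  induction t using Finset.induction_on with
  | empty =>
    obtain ⟨e, hs, ht, he, he'⟩ := ringIsomorphic_empty hR
    exact ⟨e, by simpa using hs, by simpa using ht, he, he', by simp⟩
  | insert j t hj ih =>
    obtain ⟨e, hs, ht, he, he'⟩ := h j
    obtain ⟨f, hfs, hft, hf, hf', hfU⟩ := ih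
    have hdisj {W : ι → Set α} (hW : Pairwise (Disjoint on W)) : Disjoint (W j) (⋃ i ∈ t, W i) :=
      disjoint_iUnion₂_right.2 fun i hi => hW (ne_of_mem_of_not_mem hi hj).symm
    have hst : Disjoint e.source f.source := by rw [hs, hfs]; exact hdisj hU
    have htt : Disjoint e.target f.target := by rw [ht, hft]; exact hdisj hV
    refine ⟨e.disjointUnion f hst htt, ?_, ?_, he.disjointUnion hst htt hR hf,
      he'.disjointUnion_symm hst htt hR hf', ?_⟩
    · rw [disjointUnion_source, hs, hfs, Finset.set_biUnion_insert]
    · rw [disjointUnion_target, ht, hft, Finset.set_biUnion_insert]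
    simp only [Finset.mem_insert, forall_eq_or_imp, disjointUnion_apply]
    refine ⟨?_, fun i hi => ?_⟩
    · rw [← hs, (piecewise_eqOn _ _ _).image_eq, e.image_source_eq_target, ht]
    · have hUi : U i ⊆ e.sourceᶜ := by
        rw [hs]
        exact subset_compl_iff_disjoint_left.2 (hU (ne_of_mem_of_not_mem hi hj).symm)
      rw [((piecewise_eqOn_compl _ _ _).mono hUi).image_eq, hfU i hi]

end RingIsomorphic

theorem OrderIso.ringIsomorphic_image {α : Type*} [LinearOrder α] [Nonempty α] (φ : α ≃o α)
    {U : Set α} (hU : U ∈ iocRing α) : RingIsomorphic (iocRing α) U (φ '' U) := by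
  refine ⟨φ.toEquiv.toPartialEquivOfImageEq U (φ '' U) rfl, rfl, rfl, fun A hA => ?_,
    fun A hA => ?_⟩
  · exact φ.image_mem_iocRing (isSetRing_iocRing.inter_mem hA hU)
  · exact φ.symm.image_mem_iocRing (isSetRing_iocRing.inter_mem hA (φ.image_mem_iocRing hU))

section OrderedField

variable {K : Type*} [Field K] [LinearOrder K] [IsStrictOrderedRing K]

theorem ringIsomorphic_Ioc_zero_one {p q : K} (h : p < q) :
    RingIsomorphic (iocRing K) (Ioc p q) (Ioc 0 1) := by
  let φ := (OrderIso.addRight (-p)).trans (OrderIso.mulLeft₀ (q - p)⁻¹ (inv_pos.2 (sub_pos.2 h)))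
  have hφ : φ '' Ioc p q = Ioc 0 1 := by
    rw [φ.image_Ioc]
    congr 1 <;> simp [φ, ← sub_eq_add_neg, (sub_pos.2 h).ne']
  simpa only [hφ] using φ.ringIsomorphic_image (Ioc_mem_iocRing p q)

theorem eq_empty_or_ringIsomorphic_Ioc_zero_one {A : Set K} (hA : A ∈ iocRing K) :
    A = ∅ ∨ RingIsomorphic (iocRing K) A (Ioc 0 1) := by
  refine IsSetSemiring.Ioc.supClosure_induction
    (p := fun A => A = ∅ ∨ RingIsomorphic (iocRing K) A (Ioc 0 1)) (Or.inl rfl) ?_ ?_ hA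
  · rintro _ ⟨u, v, -, rfl⟩ hne
    exact Or.inr (ringIsomorphic_Ioc_zero_one (nonempty_Ioc.1 hne))
  rintro s t hst (rfl | hs) (rfl | ht)
  · simp
  · simpa using Or.inr ht
  · simpa using Or.inr hs
  have h₁₂ : RingIsomorphic (iocRing K) t (Ioc 1 2) :=
    ht.trans (ringIsomorphic_Ioc_zero_one one_lt_two).symm
  have h₀₂ : RingIsomorphic (iocRing K) (Ioc 0 1 ∪ Ioc 1 2) (Ioc 0 1) := by
    rw [Ioc_union_Ioc_eq_Ioc zero_le_one one_le_two]
    exact ringIsomorphic_Ioc_zero_one two_pos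
  exact Or.inr ((hs.union isSetRing_iocRing h₁₂ hst (Ioc_disjoint_Ioc_of_le le_rfl)).trans h₀₂)

theorem exists_unionIfDisjoint_eq {A : Set K} (hA : A ∈ iocRing K) (hne : A.Nonempty) :
    ∃ A₁ ∈ iocRing K, ∃ A₂ ∈ iocRing K, A₁ ⊆ A ∧ A₂ ⊆ A ∧ unionIfDisjoint A₁ A₂ = A := by
  obtain ⟨e, hs, ht, -, he⟩ :=
    (eq_empty_or_ringIsomorphic_Ioc_zero_one hA).resolve_left hne.ne_empty
  have hm₀ : (0 : K) < 2⁻¹ := by norm_num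
  have hm₁ : (2⁻¹ : K) < 1 := by norm_num
  have hpiece {u v : K} (huv : Ioc u v ⊆ e.target) :
      e.symm '' Ioc u v ∈ iocRing K ∧ e.symm '' Ioc u v ⊆ A := by
    refine ⟨?_, hs ▸ (e.mapsTo_symm.mono_left huv).image_subset⟩
    simpa [inter_eq_left.2 huv] using he _ (Ioc_mem_iocRing u v)
  have hsub₁ : Ioc 0 2⁻¹ ⊆ e.target := ht ▸ Ioc_subset_Ioc_right hm₁.le
  have hsub₂ : Ioc 2⁻¹ 1 ⊆ e.target := ht ▸ Ioc_subset_Ioc_left hm₀.le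
  have hsplit : unionIfDisjoint (Ioc 0 2⁻¹) (Ioc 2⁻¹ 1) = e.target := by
    rw [unionIfDisjoint_of_disjoint (Ioc_disjoint_Ioc_of_le le_rfl) (nonempty_Ioc.2 hm₀)
      (nonempty_Ioc.2 hm₁), Ioc_union_Ioc_eq_Ioc hm₀.le hm₁.le, ht]
  refine ⟨_, (hpiece hsub₁).1, _, (hpiece hsub₂).1, (hpiece hsub₁).2, (hpiece hsub₂).2, ?_⟩
  rw [← e.symm.injOn.image_unionIfDisjoint hsub₁ hsub₂, hsplit, e.symm_image_target_eq_source,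
    hs]

end OrderedField

section VennCell

variable {α ι : Type*}

def vennCell (U : Set α) (a : ι → Set α) (s : Set ι) : Set α :=
  {x ∈ U | {i | x ∈ a i} = s}

theorem vennCell_mem [Finite ι] {R : Set (Set α)} (hR : IsSetRing R) {U : Set α} (hU : U ∈ R)
    {a : ι → Set α} (ha : ∀ i, a i ∈ R) (s : Set ι) : vennCell U a s ∈ R := by
  classical
  cases nonempty_fintype ι
  have hcell : vennCell U a s = U \ ⋃ i ∈ Finset.univ, if i ∈ s then U \ a i else a i := by
    ext x
    simp only [vennCell, mem_ofPred_eq, Set.ext_iff, mem_sdiff, mem_iUnion, Finset.mem_univ,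
      exists_true_left, not_exists]
    refine and_congr_right fun hx => forall_congr' fun i => ?_
    split_ifs <;> simp_all
  rw [hcell]
  refine hR.sdiff_mem hU (hR.biUnion_mem _ fun i _ => ?_)
  split_ifs
  exacts [hR.sdiff_mem hU (ha i), ha i]

theorem pairwise_disjoint_vennCell (U : Set α) (a : ι → Set α) :
    Pairwise (Disjoint on vennCell U a) :=
  fun _ _ hst => disjoint_left.2 fun _ hs ht => hst (hs.2.symm.trans ht.2)

theorem iUnion_vennCell (U : Set α) (a : ι → Set α) : ⋃ s, vennCell U a s = U := by
  ext x
  simp [vennCell]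

theorem biUnion_vennCell {U : Set α} {a : ι → Set α} {k : ι} (hk : a k ⊆ U) :
    ⋃ (s) (_ : k ∈ s), vennCell U a s = a k := by
  ext x
  simp only [vennCell, mem_iUnion, mem_ofPred_eq, exists_prop]
  constructor
  · rintro ⟨s, hks, -, rfl⟩
    exact hks
  · exact fun hx => ⟨_, hx, hk hx, rfl⟩

end VennCell

theorem prodSet_eq_univ {S : Type*} [Semigroup S] (h : ∀ x : S, ∃ a b, x = a * b) (n : ℕ) :
    prodSet S n = univ := by
  induction n with
  | zero => rfl
  | succ n ih =>
    refine eq_univ_of_forall fun x => ?_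
    obtain ⟨a, b, rfl⟩ := h x
    exact ⟨a, ih ▸ mem_univ a, b, rfl⟩

theorem Aleph0Categorical.of_finite_invariant {S : Type*} [Semigroup S] {T : ℕ → Type*}
    [∀ n, Finite (T n)] (π : ∀ n, (Fin n → S) → T n)
    (hπ : ∀ n (a b : Fin n → S), π n a = π n b → AutRel S a b) : Aleph0Categorical S := by
  intro n _
  refine ⟨range fun τ : range (π n) => τ.2.choose, finite_range _, fun a => ?_⟩
  exact ⟨_, mem_range_self ⟨π n a, a, rfl⟩, hπ n _ _ (mem_range_self a).choose_spec⟩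

@[ext]
structure IntervalAlgebra : Type where
  val : Set ℚ
  mem : val ∈ iocRing ℚ
  subset : val ⊆ Ioc 0 1

namespace IntervalAlgebra

instance : CommSemigroup IntervalAlgebra where
  mul A B := ⟨unionIfDisjoint A.val B.val, isSetRing_iocRing.unionIfDisjoint_mem A.mem B.mem,
    unionIfDisjoint_subset A.subset B.subset⟩
  mul_assoc A B C := IntervalAlgebra.ext (unionIfDisjoint_assoc A.val B.val C.val)
  mul_comm A B := IntervalAlgebra.ext (unionIfDisjoint_comm A.val B.val)

instance : Zero IntervalAlgebra :=
  ⟨⟨∅, isSetRing_iocRing.empty_mem, empty_subset _⟩⟩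

protected theorem zero_mul (A : IntervalAlgebra) : 0 * A = 0 :=
  IntervalAlgebra.ext (empty_unionIfDisjoint A.val)

protected theorem mul_zero (A : IntervalAlgebra) : A * 0 = 0 :=
  IntervalAlgebra.ext (unionIfDisjoint_empty A.val)

protected theorem mul_self (A : IntervalAlgebra) : A * A = 0 :=
  IntervalAlgebra.ext (unionIfDisjoint_self A.val)

instance : Countable IntervalAlgebra :=
  have : Countable (iocRing ℚ) := countable_iocRing.to_subtype
  Injective.countable (f := fun A => (⟨A.val, A.mem⟩ : iocRing ℚ)) fun _ _ h =>
    IntervalAlgebra.ext (congrArg Subtype.val h)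

instance : Infinite IntervalAlgebra := by
  have : Infinite (Ioc (0 : ℚ) 1) := (Ioc_infinite zero_lt_one).to_subtype
  refine Infinite.of_injective (fun q : Ioc (0 : ℚ) 1 =>
    (⟨Ioc 0 q.1, Ioc_mem_iocRing 0 q.1, Ioc_subset_Ioc_right q.2.2⟩ : IntervalAlgebra)) ?_
  intro q r h
  have h' : Ioc 0 q.1 = Ioc 0 r.1 := congrArg IntervalAlgebra.val h
  exact Subtype.ext ((isGreatest_Ioc q.2.1).unique (h' ▸ isGreatest_Ioc r.2.1))

theorem exists_mul_eq (A : IntervalAlgebra) : ∃ B C, A = B * C := by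
  rcases A.val.eq_empty_or_nonempty with hA | hA
  · exact ⟨0, 0, by rw [IntervalAlgebra.mul_zero]; exact IntervalAlgebra.ext hA⟩
  obtain ⟨A₁, hA₁, A₂, hA₂, h₁, h₂, h⟩ := exists_unionIfDisjoint_eq A.mem hA
  exact ⟨⟨A₁, hA₁, h₁.trans A.subset⟩, ⟨A₂, hA₂, h₂.trans A.subset⟩, IntervalAlgebra.ext h.symm⟩

theorem exists_mulEquiv {e : PartialEquiv ℚ ℚ} (hs : e.source = Ioc 0 1)
    (ht : e.target = Ioc 0 1) (he : e.MapsMem (iocRing ℚ)) (he' : e.symm.MapsMem (iocRing ℚ)) :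
    ∃ φ : IntervalAlgebra ≃* IntervalAlgebra, ∀ A, (φ A).val = e '' A.val := by
  have hsub (A : IntervalAlgebra) : A.val ⊆ e.source := A.subset.trans hs.ge
  have hsub' (A : IntervalAlgebra) : A.val ⊆ e.target := A.subset.trans ht.ge
  refine ⟨⟨⟨fun A => ⟨e '' A.val, ?_, ?_⟩, fun A => ⟨e.symm '' A.val, ?_, ?_⟩, fun A => ?_,
    fun A => ?_⟩, fun A B => ?_⟩, fun A => rfl⟩
  · simpa [inter_eq_left.2 (hsub A)] using he _ A.mem
  · exact (e.mapsTo.mono_left (hsub A)).image_subset.trans ht.le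
  · simpa [inter_eq_left.2 (hsub' A)] using he' _ A.mem
  · exact (e.mapsTo_symm.mono_left (hsub' A)).image_subset.trans hs.le
  · exact IntervalAlgebra.ext (e.symm_image_image_of_subset_source (hsub A))
  · exact IntervalAlgebra.ext (e.image_symm_image_of_subset_target (hsub' A))
  · exact IntervalAlgebra.ext (e.injOn.image_unionIfDisjoint (hsub A) (hsub B))

theorem autRel_of_vennCell_eq_empty_iff {n : ℕ} {a b : Fin n → IntervalAlgebra}
    (h : ∀ s, vennCell (Ioc 0 1) (fun i => (a i).val) s = ∅ ↔
      vennCell (Ioc 0 1) (fun i => (b i).val) s = ∅) : AutRel IntervalAlgebra a b := by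
  have hcell (c : Fin n → IntervalAlgebra) (s : Set (Fin n)) :
      vennCell (Ioc 0 1) (fun i => (c i).val) s ∈ iocRing ℚ :=
    vennCell_mem isSetRing_iocRing (Ioc_mem_iocRing 0 1) (fun i => (c i).mem) s
  have hiso (s : Set (Fin n)) : RingIsomorphic (iocRing ℚ)
      (vennCell (Ioc 0 1) (fun i => (a i).val) s) (vennCell (Ioc 0 1) (fun i => (b i).val) s) := by
    rcases eq_empty_or_ringIsomorphic_Ioc_zero_one (hcell a s) with ha | ha
    · rw [ha, (h s).1 ha]
      exact ringIsomorphic_empty isSetRing_iocRing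
    rcases eq_empty_or_ringIsomorphic_Ioc_zero_one (hcell b s) with hb | hb
    · rw [(h s).2 hb, hb]
      exact ringIsomorphic_empty isSetRing_iocRing
    · exact ha.trans hb.symm
  obtain ⟨e, hs, ht, he, he', himage⟩ := RingIsomorphic.exists_partialEquiv_iUnion
    isSetRing_iocRing (pairwise_disjoint_vennCell _ _) (pairwise_disjoint_vennCell _ _) hiso
  rw [iUnion_vennCell] at hs ht
  obtain ⟨φ, hφ⟩ := exists_mulEquiv hs ht he he'
  refine ⟨φ, fun k => IntervalAlgebra.ext ?_⟩
  rw [hφ, ← biUnion_vennCell (a := fun i => (a i).val) (a k).subset, image_iUnion₂]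
  simp_rw [himage]
  exact biUnion_vennCell (a := fun i => (b i).val) (b k).subset

theorem aleph0Categorical : Aleph0Categorical IntervalAlgebra :=
  .of_finite_invariant
    (fun n a => {s : Set (Fin n) | vennCell (Ioc 0 1) (fun i => (a i).val) s = ∅})
    fun _ _ _ h => autRel_of_vennCell_eq_empty_iff fun s => Set.ext_iff.1 h s

end IntervalAlgebra

theorem exists_aleph0Categorical_nil_not_nilpotent :
    ∃ (S : Type) (_ : Semigroup S) (z : S),
      Countable S ∧ Infinite S ∧
      (∀ a b : S, a * b = b * a) ∧
      (∀ x : S, z * x = z ∧ x * z = z) ∧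
      Aleph0Categorical S ∧
      (∀ a : S, a * a = z) ∧
      {x : S | ∃ a b : S, x = a * b} = Set.univ ∧
      ∀ n : ℕ, prodSet S n ≠ {z} := by
  refine ⟨IntervalAlgebra, inferInstance, 0, inferInstance, inferInstance, mul_comm,
    fun A => ⟨IntervalAlgebra.zero_mul A, IntervalAlgebra.mul_zero A⟩,
    IntervalAlgebra.aleph0Categorical, IntervalAlgebra.mul_self,
    eq_univ_of_forall IntervalAlgebra.exists_mul_eq, fun n h => ?_⟩
  rw [prodSet_eq_univ IntervalAlgebra.exists_mul_eq] at h
  have htop : (⟨Ioc 0 1, Ioc_mem_iocRing 0 1, subset_rfl⟩ : IntervalAlgebra) = 0 :=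
    mem_singleton_iff.1 (h ▸ mem_univ _)
  exact (nonempty_Ioc.2 zero_lt_one).ne_empty (congrArg IntervalAlgebra.val htop)
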